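/- arXiv:2506.19043 — 5 statements merged into one kernel-verified Lean document; each statement's English description precedes it below -/
import Mathlib

section
/- Let X be a complete separable median space and let H' be a family of open halfspaces of X (open with respect to the metric topology) such that any two distinct members of H' are either disjoint or transverse. If there exists n ∈ ℕ such that H' contains no family of more than n pairwise transverse halfspaces, then H' is countable. -/
open Set Metric MeasureTheory

/-- The metric interval `[a,b]` in a metric space. -/
def mInterval {X : Type*} [MetricSpace X] (a b : X) : Set X :=
  {c : X | dist a b = dist a c + dist c b}

/-- A median space: each triple of points has a unique median point. -/
def IsMedianSpace (X : Type*) [MetricSpace X] : Prop :=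
  ∀ x y z : X, ∃! m : X, m ∈ mInterval x y ∧ m ∈ mInterval x z ∧ m ∈ mInterval y z

/-- Convexity with respect to metric intervals. -/
def MedConvex {X : Type*} [MetricSpace X] (C : Set X) : Prop :=
  ∀ a ∈ C, ∀ b ∈ C, mInterval a b ⊆ C

/-- A halfspace: a subset such that it and its complement are convex. -/
def IsHalfspace {X : Type*} [MetricSpace X] (h : Set X) : Prop :=
  MedConvex h ∧ MedConvex hᶜ

/-- Two halfspaces are transverse. -/
def Transverse {X : Type*} [MetricSpace X] (h₁ h₂ : Set X) : Prop :=
  (h₁ ∩ h₂).Nonempty ∧ (h₁ ∩ h₂ᶜ).Nonempty ∧ (h₁ᶜ ∩ h₂).Nonempty ∧ (h₁ᶜ ∩ h₂ᶜ).Nonempty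

/-- Finite rank: a uniform bound on families of pairwise transverse halfspaces. -/
def HasFiniteRank (X : Type*) [MetricSpace X] : Prop :=
  ∃ n : ℕ, ∀ H : Set (Set X), (∀ h ∈ H, IsHalfspace h) → H.Pairwise Transverse →
    H.Finite ∧ H.ncard ≤ n

/-- Every nonempty member contains a point of a fixed countable dense set. -/
theorem Set.Countable.of_isOpen_of_countable_setOf_mem {X : Type*} [TopologicalSpace X]
    [TopologicalSpace.SeparableSpace X] {F : Set (Set X)} (hopen : ∀ s ∈ F, IsOpen s)
    (hpt : ∀ x, {s | s ∈ F ∧ x ∈ s}.Countable) : F.Countable := by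
  obtain ⟨D, hDc, hDd⟩ := TopologicalSpace.exists_countable_dense X
  have hcover : F ⊆ insert ∅ (⋃ d ∈ D, {s | s ∈ F ∧ d ∈ s}) := by
    intro s hs
    rcases s.eq_empty_or_nonempty with rfl | hne
    · exact mem_insert _ _
    · obtain ⟨d, hdD, hds⟩ := hDd.exists_mem_open (hopen s hs) hne
      exact mem_insert_of_mem _ (mem_biUnion hdD ⟨hs, hds⟩)
  exact ((hDc.biUnion fun d _ => hpt d).insert ∅).mono hcover

theorem pairwise_transverse_setOf_mem {X : Type*} [MetricSpace X] {H : Set (Set X)}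
    (hdt : ∀ h₁ ∈ H, ∀ h₂ ∈ H, h₁ ≠ h₂ → Disjoint h₁ h₂ ∨ Transverse h₁ h₂) (x : X) :
    {h | h ∈ H ∧ x ∈ h}.Pairwise Transverse := by
  intro h₁ ⟨h₁H, hx₁⟩ h₂ ⟨h₂H, hx₂⟩ hne
  exact (hdt h₁ h₁H h₂ h₂H hne).resolve_left
    fun hdisj => Set.disjoint_left.mp hdisj hx₁ hx₂

theorem stmt0_general {X : Type*} [MetricSpace X]
    [TopologicalSpace.SeparableSpace X]
    (H' : Set (Set X))
    (hH' : ∀ h ∈ H', IsHalfspace h ∧ IsOpen h)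
    (hdt : ∀ h₁ ∈ H', ∀ h₂ ∈ H', h₁ ≠ h₂ → Disjoint h₁ h₂ ∨ Transverse h₁ h₂)
    (n : ℕ)
    (hn : ∀ T ⊆ H', T.Pairwise Transverse → T.Finite ∧ T.ncard ≤ n) :
    H'.Countable :=
  .of_isOpen_of_countable_setOf_mem (fun h hh => (hH' h hh).2) fun x =>
    (hn _ (fun _ hh => hh.1) (pairwise_transverse_setOf_mem hdt x)).1.countable

/-- In a complete separable median space, a family of open halfspaces whose
distinct members are pairwise disjoint or transverse, with a uniform bound `n` on the
number of pairwise transverse members, is countable. -/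
theorem stmt0 {X : Type*} [MetricSpace X] [CompleteSpace X]
    [TopologicalSpace.SeparableSpace X]
    (hmed : IsMedianSpace X)
    (H' : Set (Set X))
    (hH' : ∀ h ∈ H', IsHalfspace h ∧ IsOpen h)
    (hdt : ∀ h₁ ∈ H', ∀ h₂ ∈ H', h₁ ≠ h₂ → Disjoint h₁ h₂ ∨ Transverse h₁ h₂)
    (n : ℕ)
    (hn : ∀ T ⊆ H', T.Pairwise Transverse → T.Finite ∧ T.ncard ≤ n) :
    H'.Countable :=
  stmt0_general H' hH' hdt n hn
end

section
/- Let X be a complete separable median space of finite rank and let C ⊆ X be a nonempty proper convex subset. Then the set of closed halfspaces of X that contain C and are minimal with respect to inclusion among all closed halfspaces containing C is nonempty and countable. -/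
/-!
Minimal closed halfspaces containing `C` exist by Zorn's lemma, since the intersection of a chain
of closed halfspaces is again a closed halfspace. Two distinct minimal ones are not nested, share
the points of `C`, and so are transverse as soon as they both miss a common point `d`; by finite
rank only finitely many of them miss a given `d`. Every minimal halfspace other than `univ` misses
a point of a countable dense set, as its complement is open and nonempty.
-/

open Set Metric MeasureTheory

section MedianConvexity

variable {X : Type*} [MetricSpace X]

theorem MedConvex.sInter {S : Set (Set X)} (hS : ∀ s ∈ S, MedConvex s) : MedConvex (⋂₀ S) :=
  fun _ ha _ hb _ hx s hs => hS s hs _ (ha s hs) _ (hb s hs) hx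

theorem MedConvex.sUnion_of_isChain {S : Set (Set X)} (hS : ∀ s ∈ S, MedConvex s)
    (hchain : IsChain (· ⊆ ·) S) : MedConvex (⋃₀ S) := by
  rintro a ⟨s, hs, has⟩ b ⟨t, ht, hbt⟩ x hx
  rcases hchain.total hs ht with hst | hts
  · exact ⟨t, ht, hS t ht a (hst has) b hbt hx⟩
  · exact ⟨s, hs, hS s hs a has b (hts hbt) hx⟩

theorem IsHalfspace.univ : IsHalfspace (univ : Set X) :=
  ⟨fun _ _ _ _ => subset_univ _, by simp [MedConvex]⟩

theorem IsHalfspace.sInter_of_isChain {S : Set (Set X)} (hS : ∀ s ∈ S, IsHalfspace s)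
    (hchain : IsChain (· ⊆ ·) S) : IsHalfspace (⋂₀ S) := by
  refine ⟨MedConvex.sInter fun s hs => (hS s hs).1, ?_⟩
  rw [compl_sInter]
  refine MedConvex.sUnion_of_isChain ?_ ?_
  · rintro _ ⟨s, hs, rfl⟩
    exact (hS s hs).2
  · have hcompl : IsChain (· ⊇ ·) (compl '' S) :=
      hchain.image_of_map_rel (· ⊆ ·) (fun s t : Set X => t ⊆ s) compl
        fun _ _ => compl_subset_compl.mpr
    exact hcompl.symm

theorem exists_minimal_closedHalfspace_superset (C : Set X) :
    ∃ h, Minimal (fun h : Set X => IsHalfspace h ∧ IsClosed h ∧ C ⊆ h) h := by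
  obtain ⟨m, -, hm⟩ := zorn_superset_nonempty {h : Set X | IsHalfspace h ∧ IsClosed h ∧ C ⊆ h}
    (fun c hc hchain _ => ⟨⋂₀ c,
      ⟨IsHalfspace.sInter_of_isChain (fun s hs => (hc hs).1) hchain,
        isClosed_sInter fun s hs => (hc hs).2.1, subset_sInter fun s hs => (hc hs).2.2⟩,
      fun _ => sInter_subset_of_mem⟩)
    univ ⟨IsHalfspace.univ, isClosed_univ, subset_univ C⟩
  exact ⟨m, hm⟩

theorem transverse_of_not_subset {h₁ h₂ : Set X}
    (hin : (h₁ ∩ h₂).Nonempty) (hout : (h₁ᶜ ∩ h₂ᶜ).Nonempty) (h₁₂ : ¬h₁ ⊆ h₂) (h₂₁ : ¬h₂ ⊆ h₁) :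
    Transverse h₁ h₂ :=
  ⟨hin, inter_compl_nonempty_iff.mpr h₁₂, inter_comm h₁ᶜ h₂ ▸ inter_compl_nonempty_iff.mpr h₂₁,
    hout⟩

theorem HasFiniteRank.finite_minimal_notMem (hrank : HasFiniteRank X)
    {C : Set X} (hC : C.Nonempty) (d : X) :
    {h | Minimal (fun h : Set X => IsHalfspace h ∧ IsClosed h ∧ C ⊆ h) h ∧ d ∉ h}.Finite := by
  obtain ⟨n, hn⟩ := hrank
  obtain ⟨c, hc⟩ := hC
  refine (hn _ (fun h hh => hh.1.prop.1) ?_).1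
  intro h₁ hh₁ h₂ hh₂ hne
  exact transverse_of_not_subset ⟨c, hh₁.1.prop.2.2 hc, hh₂.1.prop.2.2 hc⟩ ⟨d, hh₁.2, hh₂.2⟩
    (fun hsub => hne (hh₂.1.eq_of_le hh₁.1.prop hsub))
    (fun hsub => hne (hh₁.1.eq_of_le hh₂.1.prop hsub).symm)

end MedianConvexity

theorem countable_of_forall_countable_notMem {X : Type*} [TopologicalSpace X]
    [TopologicalSpace.SeparableSpace X] {T : Set (Set X)} (hclosed : ∀ h ∈ T, IsClosed h)
    (hcount : ∀ d, {h ∈ T | d ∉ h}.Countable) : T.Countable := by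
  obtain ⟨D, hDc, hDd⟩ := TopologicalSpace.exists_countable_dense X
  refine ((hDc.biUnion fun d _ => hcount d).insert univ).mono fun h hh => ?_
  rcases eq_or_ne h univ with rfl | hne
  · exact mem_insert _ _
  · obtain ⟨d, hdD, hdh⟩ :=
      hDd.exists_mem_open (hclosed h hh).isOpen_compl (nonempty_compl.mpr hne)
    exact mem_insert_of_mem _ (mem_biUnion hdD ⟨hh, hdh⟩)

theorem stmt1_general {X : Type*} [MetricSpace X]
    [TopologicalSpace.SeparableSpace X]
    (hrank : HasFiniteRank X)
    (C : Set X) (hCne : C.Nonempty) :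
    ({h : Set X | IsHalfspace h ∧ IsClosed h ∧ C ⊆ h ∧
        ∀ h' : Set X, IsHalfspace h' → IsClosed h' → C ⊆ h' → h' ⊆ h → h' = h}).Nonempty ∧
    ({h : Set X | IsHalfspace h ∧ IsClosed h ∧ C ⊆ h ∧
        ∀ h' : Set X, IsHalfspace h' → IsClosed h' → C ⊆ h' → h' ⊆ h → h' = h}).Countable := by
  have hT : {h : Set X | IsHalfspace h ∧ IsClosed h ∧ C ⊆ h ∧
        ∀ h' : Set X, IsHalfspace h' → IsClosed h' → C ⊆ h' → h' ⊆ h → h' = h} =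
      {h | Minimal (fun h : Set X => IsHalfspace h ∧ IsClosed h ∧ C ⊆ h) h} := by
    ext h
    simp only [mem_ofPred_eq, minimal_iff, and_imp, and_assoc, eq_comm (a := h)]
  rw [hT]
  exact ⟨exists_minimal_closedHalfspace_superset C,
    countable_of_forall_countable_notMem (fun _ hh => hh.1.2.1)
      fun d => (hrank.finite_minimal_notMem hCne d).countable⟩

/-- In a complete separable median space of finite rank, for a nonempty proper
convex subset `C`, the set of closed halfspaces containing `C` that are minimal (w.r.t.
inclusion) among closed halfspaces containing `C` is nonempty and countable. -/
theorem stmt1 {X : Type*} [MetricSpace X] [CompleteSpace X]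
    [TopologicalSpace.SeparableSpace X]
    (hmed : IsMedianSpace X) (hrank : HasFiniteRank X)
    (C : Set X) (hCne : C.Nonempty) (hCproper : C ≠ Set.univ) (hCconv : MedConvex C) :
    ({h : Set X | IsHalfspace h ∧ IsClosed h ∧ C ⊆ h ∧
        ∀ h' : Set X, IsHalfspace h' → IsClosed h' → C ⊆ h' → h' ⊆ h → h' = h}).Nonempty ∧
    ({h : Set X | IsHalfspace h ∧ IsClosed h ∧ C ⊆ h ∧
        ∀ h' : Set X, IsHalfspace h' → IsClosed h' → C ⊆ h' → h' ⊆ h → h' = h}).Countable :=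
  stmt1_general hrank C hCne
end

section
/- Let M be a median algebra, let C ⊆ M be a retract with retraction π_C : M → C, and let C' ⊆ M be a convex subset with C ∩ C' ≠ ∅. Then the image π_C(C') equals C ∩ C'. -/
theorem retraction_apply_of_mem {M : Type*} (m : M → M → M → M)
    (hm1 : ∀ x y : M, m x x y = x) (hm3 : ∀ x y z : M, m x y z = m x z y)
    (C : Set M) (π : M → M) (hret : ∀ x : M, ∀ c ∈ C, m x (π x) c = π x)
    {c : M} (hc : c ∈ C) : π c = c := by
  simpa only [hm3, hm1] using (hret c c hc).symm

theorem stmt2_general {M : Type*} (m : M → M → M → M)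
    (hm1 : ∀ x y : M, m x x y = x)
    (hm3 : ∀ x y z : M, m x y z = m x z y)
    (C : Set M) (π : M → M)
    (hπC : ∀ x : M, π x ∈ C)
    (hret : ∀ x : M, ∀ c ∈ C, m x (π x) c = π x)
    (C' : Set M)
    (hC'conv : ∀ a ∈ C', ∀ b ∈ C', {c : M | m a c b = c} ⊆ C')
    (hmeet : (C ∩ C').Nonempty) :
    π '' C' = C ∩ C' := by
  obtain ⟨z, hzC, hzC'⟩ := hmeet
  ext x
  constructor
  · rintro ⟨y, hy, rfl⟩
    -- `π y` lies in the interval `[y, z]`, whose endpoints are both in `C'`.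
    exact ⟨hπC y, hC'conv y hy z hzC' (hret y z hzC)⟩
  · rintro ⟨hxC, hxC'⟩
    exact ⟨x, hxC', retraction_apply_of_mem m hm1 hm3 C π hret hxC⟩

/-- In a median algebra, if `C` is a retract (with retraction `π`) and `C'` is a
convex subset meeting `C`, then `π '' C' = C ∩ C'`. -/
theorem stmt2 {M : Type*} (m : M → M → M → M)
    (hm1 : ∀ x y : M, m x x y = x)
    (hm2 : ∀ x y z : M, m x y z = m y x z)
    (hm3 : ∀ x y z : M, m x y z = m x z y)
    (hm4 : ∀ x y z t w : M, m (m x y z) t w = m x (m y t w) (m z t w))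
    (C : Set M) (π : M → M)
    (hπC : ∀ x : M, π x ∈ C)
    (hCconv : ∀ a ∈ C, ∀ b ∈ C, {c : M | m a c b = c} ⊆ C)
    (hret : ∀ x : M, ∀ c ∈ C, m x (π x) c = π x)
    (C' : Set M)
    (hC'conv : ∀ a ∈ C', ∀ b ∈ C', {c : M | m a c b = c} ⊆ C')
    (hmeet : (C ∩ C').Nonempty) :
    π '' C' = C ∩ C' :=
  stmt2_general m hm1 hm3 C π hπC hret C' hC'conv hmeet
end

section
/- Let (X,d) be a median space. Then the distance function d is a negative definite kernel: for every n ∈ ℕ, all points x₁,…,xₙ ∈ X, and all complex numbers λ₁,…,λₙ with λ₁ + ⋯ + λₙ = 0, the real part of Σ_{i,j=1}^{n} λᵢ · conj(λⱼ) · d(xᵢ,xⱼ) is ≤ 0. -/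
open Set Metric MeasureTheory

/-!
Fix a basepoint `p` and order `X` by `a ≤ b ↔ a ∈ [p, b]`. The median `m(p, a, b)` is the meet
`a ⊓ b`, and `d(a, b) = h a + h b - 2 h (a ⊓ b)` with `h = d(p, ·)`. For weights of sum zero this
gives `∑ wᵢ wⱼ d(xᵢ, xⱼ) = -2 ∑ wᵢ wⱼ h (xᵢ ⊓ xⱼ)`, so it suffices that the kernel `h (a ⊓ b)` be
positive semidefinite.

Gates onto median intervals make each `[p, s]` a distributive lattice, with join the median with
`s`, on which `h` is a modular valuation. By inclusion–exclusion the iterated differences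
`a ↦ φ a - φ (a ⊓ c)` of `h` are `h a - h (a ⊓ (c₁ ⊔ ⋯ ⊔ cₖ)) ≥ 0`: `h` is completely monotone.
Finally, for a completely monotone `φ` the kernel `φ (a ⊓ b)` is positive semidefinite, by
induction on the number of points after splitting `φ = φ (· ⊓ c) + (φ - φ (· ⊓ c))`.
-/

namespace MedianSpace

variable {X : Type*} [MetricSpace X] {a b c x y z t : X}

theorem mem_mInterval_iff : c ∈ mInterval a b ↔ dist a b = dist a c + dist c b := Iff.rfl

theorem mem_mInterval_comm : c ∈ mInterval a b ↔ c ∈ mInterval b a := by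
  rw [mem_mInterval_iff, mem_mInterval_iff, dist_comm b a, dist_comm b c, dist_comm c a, add_comm]

theorem left_mem_mInterval : a ∈ mInterval a b := by simp [mem_mInterval_iff]

theorem right_mem_mInterval : b ∈ mInterval a b := by simp [mem_mInterval_iff]

theorem mInterval_subset_left (hb : b ∈ mInterval a c) : mInterval a b ⊆ mInterval a c := by
  intro x hx
  rw [mem_mInterval_iff] at *
  linarith [dist_triangle x b c, dist_triangle a x c]

theorem mem_mInterval_of_mem_left (hb : b ∈ mInterval a c) (hx : x ∈ mInterval a b) :
    b ∈ mInterval x c := by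
  rw [mem_mInterval_iff] at *
  linarith [dist_triangle x b c, dist_triangle a x c]

theorem mInterval_subset_right (hb : b ∈ mInterval a c) : mInterval b c ⊆ mInterval a c :=
  fun _ hx ↦ mem_mInterval_comm.1 <|
    mInterval_subset_left (mem_mInterval_comm.1 hb) (mem_mInterval_comm.1 hx)

theorem mem_mInterval_of_mem_right (hb : b ∈ mInterval a c) (hx : x ∈ mInterval b c) :
    b ∈ mInterval a x :=
  mem_mInterval_comm.1 <|
    mem_mInterval_of_mem_left (mem_mInterval_comm.1 hb) (mem_mInterval_comm.1 hx)

variable [hX : Fact (IsMedianSpace X)]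

noncomputable def median (x y z : X) : X := (hX.out x y z).exists.choose

theorem median_mem_mInterval₁₂ (x y z : X) : median x y z ∈ mInterval x y :=
  (hX.out x y z).exists.choose_spec.1

theorem median_mem_mInterval₁₃ (x y z : X) : median x y z ∈ mInterval x z :=
  (hX.out x y z).exists.choose_spec.2.1

theorem median_mem_mInterval₂₃ (x y z : X) : median x y z ∈ mInterval y z :=
  (hX.out x y z).exists.choose_spec.2.2

theorem eq_median (h₁₂ : t ∈ mInterval x y) (h₁₃ : t ∈ mInterval x z)
    (h₂₃ : t ∈ mInterval y z) : t = median x y z :=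
  (hX.out x y z).unique ⟨h₁₂, h₁₃, h₂₃⟩ (hX.out x y z).exists.choose_spec

/-- The median `median a b x` is the gate of `x` on `mInterval a b`. -/
theorem median_mem_mInterval_of_mem (hy : y ∈ mInterval a b) :
    median a b x ∈ mInterval x y := by
  set r := median a y x
  set s := median b r x
  have hr : r ∈ mInterval a b := mInterval_subset_left hy (median_mem_mInterval₁₂ a y x)
  have hs : s = median a b x := by
    refine eq_median ?_ ?_ (median_mem_mInterval₁₃ b r x)
    · exact mInterval_subset_right hr (mem_mInterval_comm.1 (median_mem_mInterval₁₂ b r x))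
    · exact mInterval_subset_right (median_mem_mInterval₁₃ a y x) (median_mem_mInterval₂₃ b r x)
  rw [← hs]
  exact mInterval_subset_left (mem_mInterval_comm.1 (median_mem_mInterval₂₃ a y x))
    (mem_mInterval_comm.1 (median_mem_mInterval₂₃ b r x))

theorem medConvex_mInterval (a b : X) : MedConvex (mInterval a b) := by
  intro u hu v hv t ht
  set μ := median a b t
  have htu := median_mem_mInterval_of_mem (x := t) hu
  have htv := median_mem_mInterval_of_mem (x := t) hv
  rw [mem_mInterval_iff] at htu htv ht
  have : dist t μ = 0 := by
    linarith [dist_triangle u μ v, dist_comm u μ, dist_comm u t, dist_nonneg (x := t) (y := μ)]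
  rw [dist_eq_zero.mp this]
  exact median_mem_mInterval₁₂ a b t

/-- Both sides equal `2 * dist t τ + dist α β`, where `τ` is the gate of `t` on
`mInterval α β ⊆ mInterval q g`. -/
theorem dist_add_dist_eq_of_rectangle {α β q g : X} (hq : q ∈ mInterval α β)
    (hg : g ∈ mInterval α β) (hα : α ∈ mInterval q g) (hβ : β ∈ mInterval q g) (t : X) :
    dist t α + dist t β = dist t q + dist t g := by
  set τ := median α β t
  have gate : ∀ y ∈ mInterval α β, dist t y = dist t τ + dist τ y :=
    fun y hy ↦ median_mem_mInterval_of_mem hy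
  have hτ : τ ∈ mInterval q g := medConvex_mInterval q g α hα β hβ (median_mem_mInterval₁₂ α β t)
  have hτ' : τ ∈ mInterval α β := median_mem_mInterval₁₂ α β t
  rw [gate α left_mem_mInterval, gate β right_mem_mInterval, gate q hq, gate g hg]
  rw [mem_mInterval_iff] at hq hg hα hβ hτ hτ'
  linarith [dist_comm α q, dist_comm β g, dist_comm α g, dist_comm τ α, dist_comm τ q]

end MedianSpace

section CompletelyMonotone

variable {α : Type*} [SemilatticeInf α]

def infDiff (c : α) (φ : α → ℝ) : α → ℝ := fun a ↦ φ a - φ (a ⊓ c)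

/-- Complete monotonicity on the semigroup `(α, ⊓)`, as in Berg–Christensen–Ressel: all iterated
differences `infDiff c₁ (⋯ (infDiff cₖ φ))` are nonnegative. -/
def IsCompletelyMonotone (φ : α → ℝ) : Prop := ∀ l : List α, 0 ≤ l.foldr infDiff φ

namespace IsCompletelyMonotone

variable {φ : α → ℝ}

theorem nonneg (hφ : IsCompletelyMonotone φ) : 0 ≤ φ := hφ []

theorem infDiff (hφ : IsCompletelyMonotone φ) (c : α) : IsCompletelyMonotone (infDiff c φ) :=
  fun l ↦ by simpa using hφ (l ++ [c])

theorem of_Iic (h : ∀ a : α, IsCompletelyMonotone (fun x : Set.Iic a ↦ φ x)) :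
    IsCompletelyMonotone φ := by
  intro l a
  let toIic : α → Set.Iic a := fun c ↦ ⟨a ⊓ c, inf_le_left⟩
  have key : ∀ (l : List α) (x : Set.Iic a),
      l.foldr _root_.infDiff φ x =
        (l.map toIic).foldr _root_.infDiff (fun y : Set.Iic a ↦ φ y) x := by
    intro l
    induction l with
    | nil => exact fun _ ↦ rfl
    | cons c l ih =>
      intro x
      have hx : ((x ⊓ toIic c : Set.Iic a) : α) = (x : α) ⊓ c := by
        rw [Set.Iic.coe_inf, ← inf_assoc, inf_eq_left.2 x.2]
      simp only [List.map_cons, List.foldr_cons, _root_.infDiff, ← ih, hx]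
  have := h a (l.map toIic) ⊤
  rwa [← key] at this

variable {ι : Type*} [DecidableEq ι] (x : ι → α) (w : ι → ℝ)

/-- The quadratic form of the family `s, s ⊓ x i` with weights `c, w i`. The induction step
splits `φ` as `φ (· ⊓ x a) + infDiff (x a) φ`. -/
theorem sq_mul_add_sum_nonneg (hφ : IsCompletelyMonotone φ) (T : Finset ι) (s : α) (c : ℝ) :
    0 ≤ c ^ 2 * φ s + 2 * c * ∑ i ∈ T, w i * φ (s ⊓ x i) +
      ∑ i ∈ T, ∑ j ∈ T, w i * w j * φ (s ⊓ x i ⊓ x j) := by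
  induction T using Finset.induction_on generalizing φ s c with
  | empty => simpa using mul_nonneg (sq_nonneg c) (hφ.nonneg s)
  | insert a T ha ih =>
    have h₁ := ih hφ (s ⊓ x a) (c + w a)
    have h₂ := ih (hφ.infDiff (x a)) s c
    simp only [_root_.infDiff, inf_right_comm _ _ (x a), mul_sub, Finset.sum_sub_distrib] at h₂
    have e₁ : ∑ j ∈ T, w a * w j * φ (s ⊓ x a ⊓ x j) = w a * ∑ i ∈ T, w i * φ (s ⊓ x a ⊓ x i) := by
      simp only [Finset.mul_sum, mul_assoc]
    have e₂ : ∑ i ∈ T, w i * w a * φ (s ⊓ x a ⊓ x i) = w a * ∑ i ∈ T, w i * φ (s ⊓ x a ⊓ x i) := by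
      simp only [Finset.mul_sum, mul_comm (w _) (w a), mul_assoc]
    simp only [Finset.sum_insert ha, inf_right_comm _ _ (x a), inf_right_idem,
      Finset.sum_add_distrib, e₁, e₂]
    linear_combination h₁ + h₂

theorem sum_sum_mul_inf_nonneg (hφ : IsCompletelyMonotone φ) (T : Finset ι) :
    0 ≤ ∑ i ∈ T, ∑ j ∈ T, w i * w j * φ (x i ⊓ x j) := by
  induction T using Finset.induction_on generalizing φ with
  | empty => simp
  | insert a T ha ih =>
    have h₁ := hφ.sq_mul_add_sum_nonneg x w T (x a) (w a)
    have h₂ := ih (hφ.infDiff (x a))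
    have e₁ : ∀ i j, x i ⊓ x j ⊓ x a = x a ⊓ x i ⊓ x j := fun i j ↦ by rw [inf_comm, inf_assoc]
    simp only [_root_.infDiff, e₁, mul_sub, Finset.sum_sub_distrib] at h₂
    have e₂ : ∑ j ∈ T, w a * w j * φ (x a ⊓ x j) = w a * ∑ i ∈ T, w i * φ (x a ⊓ x i) := by
      simp only [Finset.mul_sum, mul_assoc]
    have e₃ : ∑ i ∈ T, w i * w a * φ (x i ⊓ x a) = w a * ∑ i ∈ T, w i * φ (x a ⊓ x i) := by
      simp only [Finset.mul_sum, mul_comm (w _) (w a), mul_assoc, inf_comm (x a)]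
    simp only [Finset.sum_insert ha, inf_idem, Finset.sum_add_distrib, e₂, e₃]
    linear_combination h₁ + h₂

end IsCompletelyMonotone

theorem isCompletelyMonotone_of_modular {β : Type*} [DistribLattice β] [OrderBot β]
    {v : β → ℝ} (hmono : Monotone v) (hmod : ∀ a b, v (a ⊔ b) + v (a ⊓ b) = v a + v b)
    (hbot : v ⊥ = 0) : IsCompletelyMonotone v := by
  have key : ∀ (l : List β) (a : β), l.foldr infDiff v a = v a - v (a ⊓ l.foldr (· ⊔ ·) ⊥) := by
    intro l
    induction l with
    | nil => simp [hbot]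
    | cons c l ih =>
      intro a
      set J := l.foldr (· ⊔ ·) ⊥
      have h := hmod (a ⊓ c) (a ⊓ J)
      rw [← inf_sup_left, inf_inf_inf_comm, inf_idem, ← inf_assoc] at h
      simp only [List.foldr_cons, infDiff, ih]
      linarith
  intro l a
  simpa [key l a] using hmono inf_le_left

end CompletelyMonotone

namespace MedianSpace

variable {X : Type*} [MetricSpace X]

/-- `X` ordered from the basepoint `p`: `a ≤ b` means that `a` lies between `p` and `b`. -/
def WithBasepoint (_p : X) : Type _ := X

namespace WithBasepoint

variable {p : X}

instance : MetricSpace (WithBasepoint p) := ‹MetricSpace X›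

instance [h : Fact (IsMedianSpace X)] : Fact (IsMedianSpace (WithBasepoint p)) := h

instance : Bot (WithBasepoint p) := ⟨p⟩

instance : PartialOrder (WithBasepoint p) where
  le a b := a ∈ mInterval ⊥ b
  le_refl _ := right_mem_mInterval
  le_trans _ _ _ hab hbc := mInterval_subset_left hbc hab
  le_antisymm a b hab hba := by
    rw [mem_mInterval_iff] at hab hba
    exact dist_eq_zero.mp (by linarith [dist_comm a b, dist_nonneg (x := a) (y := b)])

instance : OrderBot (WithBasepoint p) where
  bot_le _ := left_mem_mInterval

theorem le_def {a b : WithBasepoint p} : a ≤ b ↔ a ∈ mInterval ⊥ b := Iff.rfl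

theorem le_iff_dist {a b : WithBasepoint p} : a ≤ b ↔ dist ⊥ b = dist ⊥ a + dist a b := Iff.rfl

theorem dist_bot_mono : Monotone (dist (⊥ : WithBasepoint p)) := fun a b h ↦ by
  rw [le_iff_dist.1 h]
  exact le_add_of_nonneg_right dist_nonneg

theorem eq_of_le_of_dist_bot_le {a b : WithBasepoint p} (h : a ≤ b) (hd : dist ⊥ b ≤ dist ⊥ a) :
    a = b := by
  have := le_iff_dist.1 h
  exact dist_eq_zero.mp (by linarith [dist_nonneg (x := a) (y := b)])

variable [Fact (IsMedianSpace X)]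

noncomputable instance : SemilatticeInf (WithBasepoint p) where
  inf a b := median ⊥ a b
  inf_le_left a b := median_mem_mInterval₁₂ ⊥ a b
  inf_le_right a b := median_mem_mInterval₁₃ ⊥ a b
  le_inf a x y hx hy := by
    have hm : median a x y = median ⊥ x y :=
      eq_median (mInterval_subset_right hx (median_mem_mInterval₁₂ a x y))
        (mInterval_subset_right hy (median_mem_mInterval₁₃ a x y)) (median_mem_mInterval₂₃ a x y)
    rw [le_def, ← hm]
    exact mem_mInterval_of_mem_right hx (median_mem_mInterval₁₂ a x y)

theorem dist_eq_dist_bot_add_dist_bot_sub_inf (a b : WithBasepoint p) :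
    dist a b = dist ⊥ a + dist ⊥ b - 2 * dist ⊥ (a ⊓ b) := by
  have hab : dist a b = dist a (a ⊓ b) + dist (a ⊓ b) b := median_mem_mInterval₂₃ ⊥ a b
  rw [hab, le_iff_dist.1 (inf_le_left (a := a) (b := b)),
    le_iff_dist.1 (inf_le_right (a := a) (b := b)), dist_comm a]
  ring

variable {s : WithBasepoint p}

noncomputable instance : Lattice (Set.Iic s) where
  __ := Set.Iic.semilatticeInf
  sup a b := ⟨median s (a : WithBasepoint p) b, mInterval_subset_right a.2
    (mem_mInterval_comm.1 (median_mem_mInterval₁₂ _ _ _))⟩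
  le_sup_left a b := mem_mInterval_of_mem_right a.2
    (mem_mInterval_comm.1 (median_mem_mInterval₁₂ s (a : WithBasepoint p) b))
  le_sup_right a b := mem_mInterval_of_mem_right b.2
    (mem_mInterval_comm.1 (median_mem_mInterval₁₃ s (a : WithBasepoint p) b))
  sup_le a b u (ha : (a : WithBasepoint p) ≤ u) (hb : (b : WithBasepoint p) ≤ u) := by
    set j := median (u : WithBasepoint p) a b
    have hau : j ∈ mInterval (a : WithBasepoint p) u :=
      mem_mInterval_comm.1 (median_mem_mInterval₁₂ _ _ _)
    have hbu : j ∈ mInterval (b : WithBasepoint p) u :=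
      mem_mInterval_comm.1 (median_mem_mInterval₁₃ _ _ _)
    have hj : j = median s (a : WithBasepoint p) b := by
      refine eq_median ?_ ?_ (median_mem_mInterval₂₃ _ _ _)
      · exact mem_mInterval_comm.1
          (mInterval_subset_left (mem_mInterval_of_mem_left u.2 ha) hau)
      · exact mem_mInterval_comm.1
          (mInterval_subset_left (mem_mInterval_of_mem_left u.2 hb) hbu)
    change median s (a : WithBasepoint p) b ∈ mInterval ⊥ (u : WithBasepoint p)
    rw [← hj]
    exact mInterval_subset_right ha hau

namespace Iic

theorem dist_eq_dist_bot_add_dist_bot_sub_inf (a b : Set.Iic s) :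
    dist a b = dist ⊥ a + dist ⊥ b - 2 * dist ⊥ (a ⊓ b) :=
  WithBasepoint.dist_eq_dist_bot_add_dist_bot_sub_inf (a : WithBasepoint p) b

theorem dist_add_dist_eq_inf_sup (t a b : Set.Iic s) :
    dist t a + dist t b = dist t (a ⊓ b) + dist t (a ⊔ b) := by
  refine dist_add_dist_eq_of_rectangle (median_mem_mInterval₂₃ ⊥ (a : WithBasepoint p) b)
    (median_mem_mInterval₂₃ s (a : WithBasepoint p) b) ?_ ?_ (t : WithBasepoint p)
  · exact mem_mInterval_of_mem_left (le_sup_left (a := a) (b := b)) (inf_le_left (a := a) (b := b))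
  · exact mem_mInterval_of_mem_left (le_sup_right (a := a) (b := b))
      (inf_le_right (a := a) (b := b))

theorem dist_bot_sup_add_dist_bot_inf (a b : Set.Iic s) :
    dist ⊥ (a ⊔ b) + dist ⊥ (a ⊓ b) = dist ⊥ a + dist ⊥ b := by
  linarith [dist_add_dist_eq_inf_sup ⊥ a b]

theorem inf_sup_le (a b c : Set.Iic s) : a ⊓ (b ⊔ c) ≤ a ⊓ b ⊔ a ⊓ c := by
  have hbc := dist_add_dist_eq_inf_sup a b c
  simp only [dist_eq_dist_bot_add_dist_bot_sub_inf a] at hbc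
  have hmod := dist_bot_sup_add_dist_bot_inf (a ⊓ b) (a ⊓ c)
  rw [← inf_inf_distrib_left] at hmod
  have hle : a ⊓ b ⊔ a ⊓ c ≤ a ⊓ (b ⊔ c) := le_inf_sup
  have hdist : dist ⊥ (a ⊓ (b ⊔ c)) ≤ dist ⊥ (a ⊓ b ⊔ a ⊓ c) := by
    linarith [dist_bot_sup_add_dist_bot_inf b c]
  exact (Subtype.ext (eq_of_le_of_dist_bot_le hle hdist)).ge

end Iic

noncomputable instance : DistribLattice (Set.Iic s) := DistribLattice.ofInfSupLe Iic.inf_sup_le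

theorem isCompletelyMonotone_dist_bot (p : X) :
    IsCompletelyMonotone (dist (⊥ : WithBasepoint p)) :=
  IsCompletelyMonotone.of_Iic fun _ ↦ isCompletelyMonotone_of_modular
    (fun _ _ h ↦ dist_bot_mono h) Iic.dist_bot_sup_add_dist_bot_inf (dist_self _)

end WithBasepoint

variable [Fact (IsMedianSpace X)]

theorem sum_sum_mul_dist_nonpos {ι : Type*} [Fintype ι] (x : ι → X) (w : ι → ℝ)
    (hw : ∑ i, w i = 0) : ∑ i, ∑ j, w i * w j * dist (x i) (x j) ≤ 0 := by
  classical
  rcases isEmpty_or_nonempty ι with hι | ⟨⟨i₀⟩⟩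
  · simp
  let y : ι → WithBasepoint (x i₀) := x
  have hpsd := (WithBasepoint.isCompletelyMonotone_dist_bot (x i₀)).sum_sum_mul_inf_nonneg
    y w Finset.univ
  have hd (i j : ι) : dist (x i) (x j) = dist ⊥ (y i) + dist ⊥ (y j) - 2 * dist ⊥ (y i ⊓ y j) :=
    WithBasepoint.dist_eq_dist_bot_add_dist_bot_sub_inf (y i) (y j)
  have h₁ : ∑ i, ∑ j, w i * w j * dist ⊥ (y i) = 0 := by
    simp only [mul_right_comm (w _) (w _), ← Finset.mul_sum, hw, mul_zero, Finset.sum_const_zero]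
  have h₂ : ∑ i, ∑ j, w i * w j * dist ⊥ (y j) = 0 := by
    simp only [mul_assoc, ← Finset.mul_sum, ← Finset.sum_mul, hw, zero_mul]
  have h₃ : ∑ i, ∑ j, w i * w j * (2 * dist ⊥ (y i ⊓ y j)) =
      2 * ∑ i, ∑ j, w i * w j * dist ⊥ (y i ⊓ y j) := by
    simp only [mul_left_comm _ (2 : ℝ), ← Finset.mul_sum]
  simp only [hd, mul_sub, mul_add, Finset.sum_sub_distrib, Finset.sum_add_distrib, h₁, h₂, h₃]
  linarith

end MedianSpace

/-- The distance of a median space is a negative definite kernel. -/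
theorem stmt7 {X : Type*} [MetricSpace X] (hmed : IsMedianSpace X)
    (n : ℕ) (x : Fin n → X) (lam : Fin n → ℂ) (hsum : ∑ i, lam i = 0) :
    (∑ i, ∑ j, lam i * (starRingEnd ℂ) (lam j) * ((dist (x i) (x j) : ℝ) : ℂ)).re ≤ 0 := by
  have : Fact (IsMedianSpace X) := ⟨hmed⟩
  have hre : ∑ i, (lam i).re = 0 := by simpa using congrArg Complex.re hsum
  have him : ∑ i, (lam i).im = 0 := by simpa using congrArg Complex.im hsum
  have key (i j : Fin n) : (lam i * (starRingEnd ℂ) (lam j) * ((dist (x i) (x j) : ℝ) : ℂ)).re =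
      (lam i).re * (lam j).re * dist (x i) (x j) + (lam i).im * (lam j).im * dist (x i) (x j) := by
    simp only [Complex.mul_re, Complex.mul_im, Complex.conj_re, Complex.conj_im,
      Complex.ofReal_re, Complex.ofReal_im]
    ring
  simp only [Complex.re_sum, key, Finset.sum_add_distrib]
  linarith [MedianSpace.sum_sum_mul_dist_nonpos x _ hre, MedianSpace.sum_sum_mul_dist_nonpos x _ him]
end

section
/- Let X be a complete median space and let C₁, C₂ ⊆ X be nonempty closed convex subsets. Then the convex hull of C₁ ∪ C₂ (the smallest convex subset of X containing C₁ ∪ C₂) is closed. -/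
open Set Metric MeasureTheory

/-!
In a median space the join `⋃ [u, v]` (`u ∈ C₁`, `v ∈ C₂`) of two convex sets is convex: for
`x ∈ [a, b]`, `y ∈ [c, d]` and `z ∈ [x, y]`, the point `z` lies between `m(a, c, z) ∈ C₁` and
`m(b, d, z) ∈ C₂`. Hence the join is the convex hull of `C₁ ∪ C₂`.

If moreover `X` is complete and `C` is nonempty, closed and convex, every `x` has a gate `p ∈ C`,
i.e. `p ∈ [x, c]` for all `c ∈ C`: the median of `x` and two almost nearest points of `C` lies in
`C`, which forces almost nearest points to be close to each other, so a nearest point exists, and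
a nearest point is a gate. Gate maps are `1`-Lipschitz, and `z` lies in the join iff
`z ∈ [g₁ z, g₂ z]` for the gate maps `g₁, g₂` of `C₁, C₂`, a closed condition.
-/

open Filter Topology

section Interval

variable {X : Type*} [MetricSpace X] {a b x y : X}

lemma mem_mInterval : x ∈ mInterval a b ↔ dist a b = dist a x + dist x b := Iff.rfl

lemma left_mem_mInterval : a ∈ mInterval a b := by
  simp [mem_mInterval]

lemma right_mem_mInterval : b ∈ mInterval a b := by
  simp [mem_mInterval]

lemma mem_mInterval_symm (h : x ∈ mInterval a b) : x ∈ mInterval b a := by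
  rw [mem_mInterval] at *
  linarith [dist_comm a b, dist_comm b x, dist_comm x a]

lemma mem_mInterval_trans_left (h₁ : x ∈ mInterval a b) (h₂ : y ∈ mInterval a x) :
    y ∈ mInterval a b := by
  rw [mem_mInterval] at *
  linarith [dist_triangle y x b, dist_triangle a y b]

lemma mem_mInterval_trans_left_right (h₁ : x ∈ mInterval a b) (h₂ : y ∈ mInterval a x) :
    x ∈ mInterval y b := by
  rw [mem_mInterval] at *
  linarith [dist_triangle y x b, dist_triangle a y b]

lemma isClosed_setOf_mem_mInterval {Y : Type*} [TopologicalSpace Y] {f g h : Y → X}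
    (hf : Continuous f) (hg : Continuous g) (hh : Continuous h) :
    IsClosed {z | h z ∈ mInterval (f z) (g z)} :=
  isClosed_eq (hf.dist hg) ((hf.dist hh).add (hh.dist hg))

end Interval

section Median

variable {X : Type*} [MetricSpace X]

def IsMedian (x y z m : X) : Prop :=
  m ∈ mInterval x y ∧ m ∈ mInterval x z ∧ m ∈ mInterval y z

lemma IsMedianSpace.exists_isMedian (hmed : IsMedianSpace X) (x y z : X) :
    ∃ m, IsMedian x y z m :=
  (hmed x y z).exists

lemma IsMedianSpace.isMedian_unique (hmed : IsMedianSpace X) {x y z m m' : X}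
    (hm : IsMedian x y z m) (hm' : IsMedian x y z m') : m = m' :=
  (hmed x y z).unique hm hm'

lemma mem_mInterval_of_isMedian (hmed : IsMedianSpace X) {a b x y z u : X}
    (hx : x ∈ mInterval a b) (hz : z ∈ mInterval x y) (hu : IsMedian a y z u) :
    z ∈ mInterval u b := by
  obtain ⟨-, hu₂, hu₃⟩ := hu
  obtain ⟨m, hm⟩ := hmed.exists_isMedian a b z
  have hzum : z ∈ mInterval u m := by
    have hzxu : z ∈ mInterval x u :=
      mem_mInterval_symm (mem_mInterval_trans_left_right (mem_mInterval_symm hz) hu₃)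
    obtain ⟨p, hp₁, hp₂, hp₃⟩ := hmed.exists_isMedian b x z
    obtain ⟨q, hq₁, hq₂, hq₃⟩ := hmed.exists_isMedian a z p
    have hpab : p ∈ mInterval a b :=
      mem_mInterval_symm (mem_mInterval_trans_left (mem_mInterval_symm hx) hp₁)
    have hqm : q = m := hmed.isMedian_unique ⟨mem_mInterval_trans_left hpab hq₂, hq₁,
      mem_mInterval_symm (mem_mInterval_trans_left (mem_mInterval_symm hp₂) hq₃)⟩ hm
    have hzup : z ∈ mInterval u p :=
      mem_mInterval_symm (mem_mInterval_trans_left_right hzxu hp₃)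
    exact hqm ▸ mem_mInterval_symm
      (mem_mInterval_trans_left_right (mem_mInterval_symm hzup) (mem_mInterval_symm hq₃))
  have hmub : m ∈ mInterval u b := by
    obtain ⟨p, hp₁, hp₂, hp₃⟩ := hmed.exists_isMedian b z u
    obtain ⟨q, hq₁, hq₂, hq₃⟩ := hmed.exists_isMedian a b p
    have hpaz : p ∈ mInterval a z :=
      mem_mInterval_symm (mem_mInterval_trans_left (mem_mInterval_symm hu₂) hp₃)
    have hqm : q = m := hmed.isMedian_unique
      ⟨hq₁, mem_mInterval_trans_left hpaz hq₂, mem_mInterval_trans_left hp₁ hq₃⟩ hm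
    exact mem_mInterval_symm (hqm ▸ mem_mInterval_trans_left hp₂ hq₃)
  exact mem_mInterval_trans_left hmub hzum

lemma mem_mInterval_of_isMedian_of_isMedian (hmed : IsMedianSpace X) {a b c d x y z u v : X}
    (hx : x ∈ mInterval a b) (hy : y ∈ mInterval c d) (hz : z ∈ mInterval x y)
    (hu : IsMedian a c z u) (hv : IsMedian b d z v) : z ∈ mInterval u v := by
  obtain ⟨-, hv₂, hv₃⟩ := hv
  obtain ⟨w, hw₁, hw₂, hw₃⟩ := hmed.exists_isMedian a z v
  suffices hzcw : z ∈ mInterval c w from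
    mem_mInterval_of_isMedian hmed hw₂ (mem_mInterval_symm hzcw) hu
  have hzyw : z ∈ mInterval y w := by
    obtain ⟨p, hp₁, hp₂, hp₃⟩ := hmed.exists_isMedian a x v
    have hpxz : p ∈ mInterval x z := mem_mInterval_of_isMedian hmed hv₂ (mem_mInterval_symm hp₃)
      ⟨right_mem_mInterval, mem_mInterval_symm (mem_mInterval_trans_left_right hx hp₁),
        left_mem_mInterval⟩
    obtain ⟨q, hq⟩ := hmed.exists_isMedian a y z
    have hzvq : z ∈ mInterval v q := mem_mInterval_symm (mem_mInterval_of_isMedian hmed hp₂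
      (mem_mInterval_trans_left_right hz hpxz) hq)
    exact mem_mInterval_symm (mem_mInterval_of_isMedian hmed hq.1 (mem_mInterval_symm hzvq)
      ⟨hw₂, hw₁, mem_mInterval_symm hw₃⟩)
  have hwdz : w ∈ mInterval d z :=
    mem_mInterval_symm (mem_mInterval_trans_left (mem_mInterval_symm hv₃) hw₃)
  exact mem_mInterval_symm (mem_mInterval_of_isMedian hmed (mem_mInterval_symm hy) hzyw
    ⟨right_mem_mInterval, hwdz, left_mem_mInterval⟩)

end Median

section Gate

variable {X : Type*} [MetricSpace X] {C : Set X}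

def IsGate (C : Set X) (x p : X) : Prop :=
  p ∈ C ∧ ∀ c ∈ C, p ∈ mInterval x c

lemma IsGate.dist_le {x y p q : X} (hp : IsGate C x p) (hq : IsGate C y q) :
    dist p q ≤ dist x y := by
  have h₁ := mem_mInterval.1 (hp.2 q hq.1)
  have h₂ := mem_mInterval.1 (hq.2 p hp.1)
  linarith [dist_triangle x y q, dist_triangle y x p, dist_comm p q, dist_comm x y]

lemma lipschitzWith_one_of_isGate {g : X → X} (hg : ∀ x, IsGate C x (g x)) :
    LipschitzWith 1 g :=
  LipschitzWith.of_dist_le_mul fun x y => by simpa using (hg x).dist_le (hg y)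

lemma IsGate.mem_mInterval_of_mem {z w c p : X} (hp : IsGate C z p) (hc : c ∈ C)
    (hz : z ∈ mInterval c w) : z ∈ mInterval p w := by
  have h := mem_mInterval.1 (hp.2 c hc)
  rw [mem_mInterval] at *
  linarith [dist_triangle p z w, dist_triangle c p w, dist_comm z c, dist_comm p c,
    dist_comm p z]

lemma isGate_of_forall_dist_le (hmed : IsMedianSpace X) (hcv : MedConvex C) {x p : X}
    (hp : p ∈ C) (hmin : ∀ c ∈ C, dist x p ≤ dist x c) :
    IsGate C x p := by
  refine ⟨hp, fun c hc => ?_⟩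
  obtain ⟨m, hm₁, hm₂, hm₃⟩ := hmed.exists_isMedian x p c
  have hmp : m = p := by
    have := mem_mInterval.1 hm₁
    have := hmin m (hcv p hp c hc hm₃)
    exact dist_eq_zero.1 (by linarith [dist_nonneg (x := m) (y := p)])
  exact hmp ▸ hm₂

lemma dist_add_two_mul_infDist_le (hmed : IsMedianSpace X) (hcv : MedConvex C) (x : X)
    {c c' : X} (hc : c ∈ C) (hc' : c' ∈ C) :
    dist c c' + 2 * infDist x C ≤ dist x c + dist x c' := by
  obtain ⟨m, hm₁, hm₂, hm₃⟩ := hmed.exists_isMedian x c c'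
  have := infDist_le_dist_of_mem (x := x) (hcv c hc c' hc' hm₃)
  rw [mem_mInterval] at hm₁ hm₂ hm₃
  linarith [dist_comm m c]

lemma exists_forall_dist_le [CompleteSpace X] (hmed : IsMedianSpace X) (hcv : MedConvex C)
    (hne : C.Nonempty) (hcl : IsClosed C) (x : X) :
    ∃ p ∈ C, ∀ c ∈ C, dist x p ≤ dist x c := by
  have hε : Tendsto (fun n : ℕ => 1 / ((n : ℝ) + 1)) atTop (𝓝 0) :=
    tendsto_one_div_add_atTop_nhds_zero_nat
  choose c hcC hc using fun n : ℕ =>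
    (infDist_lt_iff hne).1 (lt_add_of_pos_right (infDist x C) (Nat.one_div_pos_of_nat (n := n)))
  have hcauchy : CauchySeq c := by
    refine cauchySeq_of_le_tendsto_0 (fun N : ℕ => 2 * (1 / ((N : ℝ) + 1)))
      (fun m n N hm hn => ?_) (by simpa using hε.const_mul 2)
    linarith [dist_add_two_mul_infDist_le hmed hcv x (hcC m) (hcC n), hc m, hc n,
      Nat.one_div_le_one_div (α := ℝ) hm, Nat.one_div_le_one_div (α := ℝ) hn]
  obtain ⟨p, hp⟩ := cauchySeq_tendsto_of_complete hcauchy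
  refine ⟨p, hcl.mem_of_tendsto hp (.of_forall hcC), fun c' hc' => ?_⟩
  have hxp : dist x p ≤ infDist x C :=
    le_of_tendsto_of_tendsto' (tendsto_const_nhds.dist hp)
      (by simpa using (tendsto_const_nhds (x := infDist x C)).add hε) fun n => (hc n).le
  exact hxp.trans (infDist_le_dist_of_mem hc')

lemma exists_isGate [CompleteSpace X] (hmed : IsMedianSpace X) (hcv : MedConvex C)
    (hne : C.Nonempty) (hcl : IsClosed C) (x : X) :
    ∃ p, IsGate C x p :=
  let ⟨p, hp, hmin⟩ := exists_forall_dist_le hmed hcv hne hcl x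
  ⟨p, isGate_of_forall_dist_le hmed hcv hp hmin⟩

end Gate

section Join

variable {X : Type*} [MetricSpace X] {C₁ C₂ : Set X}

def mJoin (C₁ C₂ : Set X) : Set X :=
  {z | ∃ u ∈ C₁, ∃ v ∈ C₂, z ∈ mInterval u v}

lemma union_subset_mJoin (h₁ne : C₁.Nonempty) (h₂ne : C₂.Nonempty) :
    C₁ ∪ C₂ ⊆ mJoin C₁ C₂ := by
  rintro z (hz | hz)
  · exact ⟨z, hz, h₂ne.some, h₂ne.some_mem, left_mem_mInterval⟩
  · exact ⟨h₁ne.some, h₁ne.some_mem, z, hz, right_mem_mInterval⟩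

lemma mJoin_subset {C : Set X} (hC : MedConvex C) (h : C₁ ∪ C₂ ⊆ C) : mJoin C₁ C₂ ⊆ C :=
  fun _ ⟨_, hu, _, hv, hz⟩ => hC _ (h (.inl hu)) _ (h (.inr hv)) hz

lemma MedConvex.mJoin (hmed : IsMedianSpace X) (h₁cv : MedConvex C₁) (h₂cv : MedConvex C₂) :
    MedConvex (mJoin C₁ C₂) := by
  rintro x ⟨a, ha, b, hb, hx⟩ y ⟨c, hc, d, hd, hy⟩ z hz
  obtain ⟨u, hu⟩ := hmed.exists_isMedian a c z
  obtain ⟨v, hv⟩ := hmed.exists_isMedian b d z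
  exact ⟨u, h₁cv a ha c hc hu.1, v, h₂cv b hb d hd hv.1,
    mem_mInterval_of_isMedian_of_isMedian hmed hx hy hz hu hv⟩

lemma sInter_medConvex_eq_mJoin (hmed : IsMedianSpace X) (h₁ne : C₁.Nonempty)
    (h₂ne : C₂.Nonempty) (h₁cv : MedConvex C₁) (h₂cv : MedConvex C₂) :
    ⋂₀ {C : Set X | MedConvex C ∧ C₁ ∪ C₂ ⊆ C} = mJoin C₁ C₂ := by
  refine (sInter_subset_of_mem ?_).antisymm (subset_sInter fun _ ⟨hC, h⟩ => mJoin_subset hC h)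
  exact ⟨h₁cv.mJoin hmed h₂cv, union_subset_mJoin h₁ne h₂ne⟩

lemma mJoin_eq_setOf_mem_mInterval_gate {g₁ g₂ : X → X} (hg₁ : ∀ x, IsGate C₁ x (g₁ x))
    (hg₂ : ∀ x, IsGate C₂ x (g₂ x)) : mJoin C₁ C₂ = {z | z ∈ mInterval (g₁ z) (g₂ z)} := by
  ext z
  refine ⟨fun ⟨u, hu, v, hv, hz⟩ => ?_, fun hz => ⟨g₁ z, (hg₁ z).1, g₂ z, (hg₂ z).1, hz⟩⟩
  have hz₁ : z ∈ mInterval (g₁ z) v := (hg₁ z).mem_mInterval_of_mem hu hz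
  exact mem_mInterval_symm ((hg₂ z).mem_mInterval_of_mem hv (mem_mInterval_symm hz₁))

lemma isClosed_mJoin [CompleteSpace X] (hmed : IsMedianSpace X) (h₁ne : C₁.Nonempty)
    (h₂ne : C₂.Nonempty) (h₁cl : IsClosed C₁) (h₂cl : IsClosed C₂) (h₁cv : MedConvex C₁)
    (h₂cv : MedConvex C₂) : IsClosed (mJoin C₁ C₂) := by
  choose g₁ hg₁ using exists_isGate hmed h₁cv h₁ne h₁cl
  choose g₂ hg₂ using exists_isGate hmed h₂cv h₂ne h₂cl
  rw [mJoin_eq_setOf_mem_mInterval_gate hg₁ hg₂]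
  exact isClosed_setOf_mem_mInterval (lipschitzWith_one_of_isGate hg₁).continuous
    (lipschitzWith_one_of_isGate hg₂).continuous continuous_id

end Join

/-- In a complete median space, the convex hull of the union of two nonempty
closed convex subsets is closed. -/
theorem stmt10 {X : Type*} [MetricSpace X] [CompleteSpace X]
    (hmed : IsMedianSpace X)
    (C₁ C₂ : Set X) (h₁ne : C₁.Nonempty) (h₂ne : C₂.Nonempty)
    (h₁cl : IsClosed C₁) (h₂cl : IsClosed C₂)
    (h₁cv : MedConvex C₁) (h₂cv : MedConvex C₂) :
    IsClosed (⋂₀ {C : Set X | MedConvex C ∧ C₁ ∪ C₂ ⊆ C}) := by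
  rw [sInter_medConvex_eq_mJoin hmed h₁ne h₂ne h₁cv h₂cv]
  exact isClosed_mJoin hmed h₁ne h₂ne h₁cl h₂cl h₁cv h₂cv
end
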